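/- Let N ≥ 1, let K satisfy 0 ≤ K ≤ N, let γ ∈ [0,1), and let F : 2^{{1,…,N}} → ℝ. Consider the deterministic restless bandit on {0,1}^N with initial state s^{(0)} = (1,…,1) and s^{(t+1)} = (0,…,0) for every t ≥ 0 regardless of the action, and with reward R(s,a) = F({i : a_i = 1}) if s = (1,…,1) and R(s,a) = 0 otherwise. Then the supremum, over all action sequences (a^{(t)})_{t≥0} satisfying the budget constraint |{i : a^{(t)}_i = 1}| ≤ K at every time t, of the total discounted reward Σ_{t=0}^∞ γ^t R(s^{(t)}, a^{(t)}) equals max{ F(A) : A ⊆ {1,…,N}, |A| ≤ K }, and this supremum is attained by pulling a maximizing subset at time 0. -/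

import Mathlib

/-- Number of arms pulled by a binary action vector. -/
def pulls {N : ℕ} (a : Fin N → Bool) : ℕ := ∑ i, if a i then 1 else 0

/-- State trajectory of the reduction instance: all arms start in state 1 and all
arms are in state 0 at every later time, regardless of actions. -/
def trajOne (N : ℕ) : ℕ → Fin N → Bool
  | 0 => fun _ => true
  | _ + 1 => fun _ => false

/-!
After time `0` every arm is in state `0`, so only the reward at time `0` is ever collected and
the discounted value of an action sequence is `F` of the set of arms pulled at time `0`. The
budget constraint at time `0` is exactly `|A| ≤ K`, and pulling a maximizer at every time is
feasible.
-/

lemma pulls_eq_card_filter {N : ℕ} (a : Fin N → Bool) :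
    pulls a = (Finset.univ.filter (fun i => a i = true)).card := by
  rw [pulls, Finset.card_filter]

lemma trajOne_eq_true_iff {N : ℕ} (hN : 1 ≤ N) {t : ℕ} :
    trajOne N t = (fun _ => true) ↔ t = 0 := by
  cases t with
  | zero => simp [trajOne]
  | succ n =>
    simp only [trajOne, Nat.add_one_ne_zero, iff_false]
    exact fun h => by simpa using congrFun h ⟨0, hN⟩

lemma tsum_discounted_trajOne {N : ℕ} (hN : 1 ≤ N) (γ : ℝ) (r : ℕ → ℝ) :
    ∑' t : ℕ, γ ^ t * (if trajOne N t = (fun _ => true) then r t else 0) = r 0 := by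
  rw [tsum_eq_single 0 fun t ht => by simp [trajOne_eq_true_iff hN, ht]]
  simp [trajOne]

/-- Correctness of the reduction from cardinality-constrained submodular
maximization: the optimal discounted reward of the constructed RMAB-G instance is
exactly `max { F(A) : |A| ≤ K }`, and it is attained. -/
theorem stmt_12 {N : ℕ} (hN : 1 ≤ N) (K : ℕ)
    (γ : ℝ)
    (F : Finset (Fin N) → ℝ) :
    IsGreatest
      {x : ℝ | ∃ a : ℕ → Fin N → Bool, (∀ t, pulls (a t) ≤ K) ∧
        x = ∑' t : ℕ, γ ^ t *
          (if trajOne N t = (fun _ : Fin N => true)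
            then F (Finset.univ.filter (fun i => a t i = true)) else 0)}
      ((Finset.univ.powerset.filter (fun A : Finset (Fin N) => A.card ≤ K)).sup'
        ⟨∅, by simp⟩ F) := by
  simp only [tsum_discounted_trajOne hN]
  constructor
  · obtain ⟨A, hA, hAeq⟩ := Finset.exists_mem_eq_sup'
      (s := Finset.univ.powerset.filter (fun A : Finset (Fin N) => A.card ≤ K)) ⟨∅, by simp⟩ F
    rw [Finset.mem_filter] at hA
    refine ⟨fun _ i => decide (i ∈ A), fun _ => ?_, ?_⟩
    · simpa [pulls_eq_card_filter] using hA.2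
    · rw [hAeq]
      simp
  · rintro x ⟨a, ha, rfl⟩
    refine Finset.le_sup' F (Finset.mem_filter.2 ⟨Finset.mem_powerset.2 (Finset.subset_univ _), ?_⟩)
    rw [← pulls_eq_card_filter]
    exact ha 0
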